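/- arXiv:2101.03297 — 6 statements merged into one kernel-verified Lean document; each statement's English description precedes it below -/
import Mathlib

section
/- Let g : ℝ^L → ℝ^L satisfy the strict monotone-decreasing property: (g(c₁) − g(c₂))ᵀ(c₁ − c₂) ≤ 0 for all c₁, c₂ ∈ ℝ^L, with strict inequality whenever g(c₁) ≠ g(c₂). Let C : ℝ^L → ℝ^L be monotone nondecreasing, i.e., (C(f₁) − C(f₂))ᵀ(f₁ − f₂) ≥ 0 for all f₁, f₂ ∈ ℝ^L. Then the map T(f) = g(C(f)) has at most one fixed point, i.e., if T(f₁) = f₁ and T(f₂) = f₂ then f₁ = f₂. -/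
open Matrix

/-- Uniqueness of the equilibrium flow for a strictly monotone-decreasing
traffic assignment map composed with a monotone nondecreasing cost function. -/
theorem equilibrium_flow_unique {L : ℕ}
    (g C : (Fin L → ℝ) → (Fin L → ℝ))
    (hg : ∀ c₁ c₂ : Fin L → ℝ, (g c₁ - g c₂) ⬝ᵥ (c₁ - c₂) ≤ 0)
    (hg_strict : ∀ c₁ c₂ : Fin L → ℝ, g c₁ ≠ g c₂ → (g c₁ - g c₂) ⬝ᵥ (c₁ - c₂) < 0)
    (hC : ∀ f₁ f₂ : Fin L → ℝ, 0 ≤ (C f₁ - C f₂) ⬝ᵥ (f₁ - f₂))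
    (f₁ f₂ : Fin L → ℝ) (h₁ : g (C f₁) = f₁) (h₂ : g (C f₂) = f₂) :
    f₁ = f₂ := by
  by_contra hne
  have hne' : g (C f₁) ≠ g (C f₂) := by rw [h₁, h₂]; exact hne
  have hs := hg_strict (C f₁) (C f₂) hne'
  rw [h₁, h₂] at hs
  have hc := hC f₁ f₂
  rw [dotProduct_comm] at hs
  linarith
end

section
/- Let K ≥ 1 and for each k ∈ {1,…,K} let g_k : ℝ^L → ℝ^L satisfy (g_k(c₁) − g_k(c₂))ᵀ(c₁ − c₂) ≤ 0 for all c₁, c₂ ∈ ℝ^L, with strict inequality whenever g_k(c₁) ≠ g_k(c₂). Let C : ℝ^L → ℝ^L be monotone nondecreasing, i.e., (C(f₁) − C(f₂))ᵀ(f₁ − f₂) ≥ 0 for all f₁, f₂. Then the multi-class map T(f) = Σ_{k=1}^K g_k(C(f)) has at most one fixed point. -/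
open Matrix

/-- Uniqueness of the multi-class equilibrium flow: if each class's traffic
assignment map is strictly monotone decreasing and the shared cost function is monotone
nondecreasing, then `f ↦ ∑ k, g k (C f)` has at most one fixed point. -/
theorem multiclass_equilibrium_flow_unique {L K : ℕ} (hK : 1 ≤ K)
    (g : Fin K → (Fin L → ℝ) → (Fin L → ℝ))
    (C : (Fin L → ℝ) → (Fin L → ℝ))
    (hg : ∀ (k : Fin K) (c₁ c₂ : Fin L → ℝ), (g k c₁ - g k c₂) ⬝ᵥ (c₁ - c₂) ≤ 0)
    (hg_strict : ∀ (k : Fin K) (c₁ c₂ : Fin L → ℝ),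
      g k c₁ ≠ g k c₂ → (g k c₁ - g k c₂) ⬝ᵥ (c₁ - c₂) < 0)
    (hC : ∀ f₁ f₂ : Fin L → ℝ, 0 ≤ (C f₁ - C f₂) ⬝ᵥ (f₁ - f₂))
    (f₁ f₂ : Fin L → ℝ)
    (h₁ : ∑ k, g k (C f₁) = f₁) (h₂ : ∑ k, g k (C f₂) = f₂) :
    f₁ = f₂ := by
  set c₁ := C f₁
  set c₂ := C f₂
  have hsum : ∑ k, (g k c₁ - g k c₂) ⬝ᵥ (c₁ - c₂) = (f₁ - f₂) ⬝ᵥ (c₁ - c₂) := by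
    rw [← h₁, ← h₂]
    simp only [dotProduct, Finset.sum_apply, Pi.sub_apply, Finset.sum_mul,
      ← Finset.sum_sub_distrib]
    rw [Finset.sum_comm]
  have hge : 0 ≤ (f₁ - f₂) ⬝ᵥ (c₁ - c₂) := by
    have := hC f₁ f₂
    rwa [dotProduct_comm] at this
  have hle : ∑ k, (g k c₁ - g k c₂) ⬝ᵥ (c₁ - c₂) ≤ 0 :=
    Finset.sum_nonpos fun k _ => hg k c₁ c₂
  have hzero : ∑ k, (g k c₁ - g k c₂) ⬝ᵥ (c₁ - c₂) = 0 :=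
    le_antisymm hle (hsum ▸ hge)
  have heach : ∀ k ∈ Finset.univ, (g k c₁ - g k c₂) ⬝ᵥ (c₁ - c₂) = 0 :=
    (Finset.sum_eq_zero_iff_of_nonpos fun k _ => hg k c₁ c₂).mp hzero
  have hgeq : ∀ k : Fin K, g k c₁ = g k c₂ := by
    intro k
    by_contra hne
    exact absurd (heach k (Finset.mem_univ k)) (ne_of_lt (hg_strict k c₁ c₂ hne))
  rw [← h₁, ← h₂]
  exact Finset.sum_congr rfl fun k _ => hgeq k
end

section
/- Let g : ℝ^L → ℝ^L satisfy the strict monotone-decreasing property: (g(c₁) − g(c₂))ᵀ(c₁ − c₂) < 0 for all c₁ ≠ c₂ in ℝ^L. Let C₁, C₂ : ℝ^L → ℝ^L be link cost functions such that C₁ is monotone nondecreasing, i.e., (C₁(f₁) − C₁(f₂))ᵀ(f₁ − f₂) ≥ 0 for all f₁, f₂, and such that C₁ and C₂ agree in every coordinate except coordinate l, where c_{1,l}(f) > c_{2,l}(f) for every f ∈ ℝ^L. Let f₁* be a fixed point of f ↦ g(C₁(f)) and f₂* a fixed point of f ↦ g(C₂(f)). Then the l-th coordinates satisfy f*_{1,l}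 < f*_{2,l}. -/
open Matrix

/-- Monotonicity of the equilibrium flow with respect to the link cost:
raising the cost on a single link strictly decreases the equilibrium flow on that link. -/
theorem equilibrium_flow_monotone_in_link_cost {L : ℕ}
    (g : (Fin L → ℝ) → (Fin L → ℝ))
    (hg_strict : ∀ c₁ c₂ : Fin L → ℝ, c₁ ≠ c₂ → (g c₁ - g c₂) ⬝ᵥ (c₁ - c₂) < 0)
    (C₁ C₂ : (Fin L → ℝ) → (Fin L → ℝ))
    (hC₁ : ∀ f₁ f₂ : Fin L → ℝ, 0 ≤ (C₁ f₁ - C₁ f₂) ⬝ᵥ (f₁ - f₂))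
    (l : Fin L)
    (hagree : ∀ (i : Fin L), i ≠ l → ∀ f : Fin L → ℝ, C₁ f i = C₂ f i)
    (hgt : ∀ f : Fin L → ℝ, C₁ f l > C₂ f l)
    (f₁ f₂ : Fin L → ℝ)
    (h₁ : g (C₁ f₁) = f₁) (h₂ : g (C₂ f₂) = f₂) :
    f₁ l < f₂ l := by
  have hne : C₁ f₁ ≠ C₂ f₂ := by
    intro heq
    have hf : f₁ = f₂ := by rw [← h₁, ← h₂, heq]
    have := hgt f₂
    have : C₁ f₂ l = C₂ f₂ l := by rw [← hf, heq, hf]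
    linarith [hgt f₂]
  have key : (f₁ - f₂) ⬝ᵥ (C₁ f₁ - C₂ f₂) < 0 := by
    have := hg_strict (C₁ f₁) (C₂ f₂) hne
    rwa [h₁, h₂] at this
  have hmono : 0 ≤ (f₁ - f₂) ⬝ᵥ (C₁ f₁ - C₁ f₂) := by
    have := hC₁ f₁ f₂
    rwa [dotProduct_comm] at this
  have hsplit : (f₁ - f₂) ⬝ᵥ (C₁ f₂ - C₂ f₂) < 0 := by
    have : (f₁ - f₂) ⬝ᵥ (C₁ f₁ - C₂ f₂)
        = (f₁ - f₂) ⬝ᵥ (C₁ f₁ - C₁ f₂) + (f₁ - f₂) ⬝ᵥ (C₁ f₂ - C₂ f₂) := by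
      rw [← dotProduct_add]; congr 1; abel
    linarith
  have hsum : (f₁ - f₂) ⬝ᵥ (C₁ f₂ - C₂ f₂)
      = (f₁ l - f₂ l) * (C₁ f₂ l - C₂ f₂ l) := by
    rw [dotProduct]
    rw [Finset.sum_eq_single l]
    · simp [Pi.sub_apply]
    · intro i _ hi
      simp [Pi.sub_apply, hagree i hi f₂]
    · intro h; exact absurd (Finset.mem_univ l) h
  rw [hsum] at hsplit
  have hpos : 0 < C₁ f₂ l - C₂ f₂ l := by linarith [hgt f₂]
  nlinarith
end

section
/- Fix M ≥ 1 and v ∈ ℝ^M. Let ε₁, …, ε_M be independent real random variables, each with the standard Gumbel distribution, i.e., with probability density f(x) = e^{−x} e^{−e^{−x}} on ℝ. Then E[max_{1 ≤ m ≤ M} (v_m + ε_m)] = log(Σ_{m=1}^M e^{v_m}) + γ, where γ is the Euler–Mascheroni constant. -/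
open MeasureTheory ProbabilityTheory Real Set Filter Topology

/-! If `ε` is standard Gumbel then `exp (-ε)` is exponentially distributed, so the substitution
`x = m - log t` turns the mean of the Gumbel law with location `m` into
`m - ∫₀^∞ log t e^{-t} dt = m - Γ'(1) = m + γ`.
The Gumbel family is max-stable: `v + ε` has distribution function `exp (-e^v e^{-x})`, so by
independence the maximum of the `v i + ε i` has distribution function
`exp (-(∑ e^{v i}) e^{-x})`, the Gumbel law with location `log ∑ e^{v i}`. -/

section ExpSubstitution

variable {E : Type*} [NormedAddCommGroup E] [NormedSpace ℝ E]

theorem integral_exp_smul_comp_exp (g : ℝ → E) :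
    ∫ x, exp x • g (exp x) = ∫ t in Ioi 0, g t := by
  rw [← range_exp, ← image_univ, integral_image_eq_integral_abs_deriv_smul MeasurableSet.univ
    (fun x _ => (hasDerivAt_exp x).hasDerivWithinAt) exp_injective.injOn, setIntegral_univ]
  simp_rw [abs_of_pos (exp_pos _)]

theorem integrable_exp_smul_comp_exp_iff (g : ℝ → E) :
    Integrable (fun x => exp x • g (exp x)) ↔ IntegrableOn g (Ioi 0) := by
  rw [← range_exp, ← image_univ, integrableOn_image_iff_integrableOn_abs_deriv_smul
    MeasurableSet.univ (fun x _ => (hasDerivAt_exp x).hasDerivWithinAt) exp_injective.injOn,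
    integrableOn_univ]
  simp_rw [abs_of_pos (exp_pos _)]

end ExpSubstitution

theorem abs_log_le_two_mul_rpow_neg_half_add {t : ℝ} (ht : 0 < t) :
    |log t| ≤ 2 * t ^ (-(2⁻¹ : ℝ)) + t := by
  have h_neg : -log t ≤ 2 * t ^ (-(2⁻¹ : ℝ)) := by
    have := log_le_rpow_div (inv_pos.2 ht).le (by norm_num : (0 : ℝ) < 2⁻¹)
    rwa [log_inv, inv_rpow ht.le, ← rpow_neg ht.le, div_inv_eq_mul, mul_comm] at this
  rw [abs_le]
  constructor <;> linarith [log_le_self ht.le, rpow_nonneg ht.le (-(2⁻¹ : ℝ))]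

theorem integrableOn_log_mul_exp_neg : IntegrableOn (fun t => log t * exp (-t)) (Ioi 0) := by
  have h_half := GammaIntegral_convergent (by norm_num : (0 : ℝ) < 2⁻¹)
  have h_two := GammaIntegral_convergent (by norm_num : (0 : ℝ) < 2)
  refine ((h_half.const_mul 2).add h_two).mono'
    (by fun_prop) ((ae_restrict_mem measurableSet_Ioi).mono fun t (ht : 0 < t) => ?_)
  rw [norm_mul, norm_eq_abs, norm_of_nonneg (exp_pos _).le]
  calc |log t| * exp (-t) ≤ (2 * t ^ (-(2⁻¹ : ℝ)) + t) * exp (-t) := by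
        gcongr; exact abs_log_le_two_mul_rpow_neg_half_add ht
    _ = _ := by norm_num [rpow_neg_one]; ring

theorem integral_log_mul_exp_neg : ∫ t in Ioi 0, log t * exp (-t) = -eulerMascheroniConstant := by
  set I := ∫ t in Ioi 0, log t * exp (-t)
  have h_mellin :
      ∫ t : ℝ in Ioi 0, (t : ℂ) ^ ((1 : ℂ) - 1) * (log t * exp (-t)) = (I : ℂ) := by
    simp_rw [sub_self, Complex.cpow_zero, one_mul]
    exact_mod_cast integral_ofReal (𝕜 := ℂ)
  have h_complex : HasDerivAt Complex.Gamma (I : ℂ) ((1 : ℝ) : ℂ) := by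
    have h_re : (0 : ℝ) < (1 : ℂ).re := by norm_num
    have h_eq : Complex.Gamma =ᶠ[𝓝 1] Complex.GammaIntegral :=
      Filter.mem_of_superset ((Complex.continuous_re.isOpen_preimage _ isOpen_Ioi).mem_nhds h_re)
        fun s hs => Complex.Gamma_eq_integral hs
    rw [← h_mellin, Complex.ofReal_one]
    exact (Complex.hasDerivAt_GammaIntegral h_re).congr_of_eventuallyEq h_eq
  have h_real : HasDerivAt Gamma I 1 := by
    simpa [Complex.Gamma_ofReal] using h_complex.real_of_complex
  exact h_real.unique hasDerivAt_Gamma_one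

namespace ProbabilityTheory

noncomputable def gumbelPDFReal (m x : ℝ) : ℝ := exp (-(x - m)) * exp (-exp (-(x - m)))

noncomputable def gumbelCDFReal (m x : ℝ) : ℝ := exp (-exp (-(x - m)))

noncomputable def gumbelReal (m : ℝ) : Measure ℝ :=
  volume.withDensity fun x => ENNReal.ofReal (gumbelPDFReal m x)

theorem gumbelPDFReal_nonneg (m x : ℝ) : 0 ≤ gumbelPDFReal m x := by
  unfold gumbelPDFReal; positivity

theorem hasDerivAt_gumbelCDFReal (m x : ℝ) :
    HasDerivAt (gumbelCDFReal m) (gumbelPDFReal m x) x := by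
  unfold gumbelCDFReal gumbelPDFReal
  simpa [mul_comm] using (((hasDerivAt_id x).sub_const m).neg.exp.neg).exp

theorem tendsto_gumbelCDFReal_atBot (m : ℝ) : Tendsto (gumbelCDFReal m) atBot (𝓝 0) :=
  tendsto_exp_atBot.comp <| tendsto_neg_atTop_atBot.comp <| tendsto_exp_atTop.comp <|
    tendsto_neg_atBot_atTop.comp <| tendsto_atBot_add_const_right _ (-m) tendsto_id

theorem gumbelPDFReal_sub_left (m x : ℝ) : gumbelPDFReal m (m - x) = exp x * exp (-exp x) := by
  simp only [gumbelPDFReal, sub_sub_cancel_left, neg_neg]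

theorem integral_mul_gumbelPDFReal (m : ℝ) (f : ℝ → ℝ) :
    ∫ x, f x * gumbelPDFReal m x = ∫ t in Ioi 0, f (m - log t) * exp (-t) := by
  rw [← integral_sub_left_eq_self _ volume m, ← integral_exp_smul_comp_exp]
  congr 1 with x
  simp only [gumbelPDFReal_sub_left, log_exp, smul_eq_mul]
  ring

theorem integrable_mul_gumbelPDFReal_iff (m : ℝ) (f : ℝ → ℝ) :
    Integrable (fun x => f x * gumbelPDFReal m x) ↔
      IntegrableOn (fun t => f (m - log t) * exp (-t)) (Ioi 0) := by
  rw [← integrable_comp_sub_left _ m, ← integrable_exp_smul_comp_exp_iff]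
  refine integrable_congr (ae_of_all _ fun x => ?_)
  simp only [gumbelPDFReal_sub_left, log_exp, smul_eq_mul]
  ring

theorem integrable_gumbelPDFReal (m : ℝ) : Integrable (gumbelPDFReal m) := by
  simpa using (integrable_mul_gumbelPDFReal_iff m 1).2
    (by simpa using exp_neg_integrableOn_Ioi 0 one_pos)

theorem integral_gumbelPDFReal (m : ℝ) : ∫ x, gumbelPDFReal m x = 1 := by
  simpa only [Pi.one_apply, one_mul, integral_exp_neg_Ioi_zero] using
    integral_mul_gumbelPDFReal m 1

theorem gumbelReal_Iic (m a : ℝ) : gumbelReal m (Iic a) = ENNReal.ofReal (gumbelCDFReal m a) := by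
  rw [gumbelReal, withDensity_apply _ measurableSet_Iic, ← ofReal_integral_eq_lintegral_ofReal
    (integrable_gumbelPDFReal m).integrableOn (ae_of_all _ (gumbelPDFReal_nonneg m)),
    integral_Iic_of_hasDerivAt_of_tendsto' (fun x _ => hasDerivAt_gumbelCDFReal m x)
      (integrable_gumbelPDFReal m).integrableOn (tendsto_gumbelCDFReal_atBot m), sub_zero]

instance (m : ℝ) : IsProbabilityMeasure (gumbelReal m) := by
  constructor
  rw [gumbelReal, withDensity_apply _ MeasurableSet.univ, Measure.restrict_univ,
    ← ofReal_integral_eq_lintegral_ofReal (integrable_gumbelPDFReal m)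
      (ae_of_all _ (gumbelPDFReal_nonneg m)), integral_gumbelPDFReal, ENNReal.ofReal_one]

theorem integral_gumbelReal_eq_integral_mul (m : ℝ) (f : ℝ → ℝ) :
    ∫ x, f x ∂gumbelReal m = ∫ x, f x * gumbelPDFReal m x := by
  rw [gumbelReal, integral_withDensity_eq_integral_toReal_smul (by unfold gumbelPDFReal; fun_prop)
    (ae_of_all _ fun _ => ENNReal.ofReal_lt_top)]
  simp_rw [ENNReal.toReal_ofReal (gumbelPDFReal_nonneg _ _), smul_eq_mul, mul_comm]

theorem integral_id_gumbelReal (m : ℝ) :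
    ∫ x, x ∂gumbelReal m = m + eulerMascheroniConstant := by
  have h_exp : IntegrableOn (fun t => exp (-t)) (Ioi 0) := by
    simpa using exp_neg_integrableOn_Ioi 0 one_pos
  rw [integral_gumbelReal_eq_integral_mul, integral_mul_gumbelPDFReal]
  simp_rw [sub_mul]
  rw [integral_sub (h_exp.const_mul m) integrableOn_log_mul_exp_neg, integral_const_mul,
    integral_exp_neg_Ioi_zero, integral_log_mul_exp_neg]
  ring

theorem map_const_add_gumbelReal (c m : ℝ) :
    (gumbelReal m).map (c + ·) = gumbelReal (c + m) := by
  refine (Measure.ext_of_Iic _ _ fun a => ?_).symm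
  rw [Measure.map_apply (measurable_const_add c) measurableSet_Iic, preimage_const_add_Iic,
    gumbelReal_Iic, gumbelReal_Iic, gumbelCDFReal, gumbelCDFReal]
  ring_nf

section Maximum

variable {Ω ι : Type*} [MeasurableSpace Ω] {μ : Measure Ω} [Fintype ι] [Nonempty ι]
  {X : ι → Ω → ℝ}

theorem prod_gumbelCDFReal (m : ι → ℝ) (x : ℝ) :
    ∏ i, gumbelCDFReal (m i) x = gumbelCDFReal (log (∑ i, exp (m i))) x := by
  have h_pos : 0 < ∑ i, exp (m i) := Finset.sum_pos (fun i _ => exp_pos _) Finset.univ_nonempty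
  simp_rw [gumbelCDFReal, ← exp_sum, neg_sub, exp_sub, exp_log h_pos, Finset.sum_neg_distrib,
    Finset.sum_div]

theorem iIndepFun.measure_iSup_le (hX : iIndepFun X μ) (a : ℝ) :
    μ ((fun ω => ⨆ i, X i ω) ⁻¹' Iic a) = ∏ i, μ (X i ⁻¹' Iic a) := by
  have h_inter : (fun ω => ⨆ i, X i ω) ⁻¹' Iic a = ⋂ i, X i ⁻¹' Iic a := by
    ext ω
    simp [ciSup_le_iff (finite_range _).bddAbove]
  rw [h_inter, hX.meas_iInter fun i => ⟨Iic a, measurableSet_Iic, rfl⟩]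

theorem iIndepFun.map_iSup_eq_gumbelReal {m : ι → ℝ} (hX_meas : ∀ i, Measurable (X i))
    (hX : iIndepFun X μ) (hX_law : ∀ i, μ.map (X i) = gumbelReal (m i)) :
    μ.map (fun ω => ⨆ i, X i ω) = gumbelReal (log (∑ i, exp (m i))) := by
  refine (Measure.ext_of_Iic _ _ fun a => ?_).symm
  rw [Measure.map_apply (Measurable.iSup hX_meas) measurableSet_Iic,
    hX.measure_iSup_le, gumbelReal_Iic, ← prod_gumbelCDFReal,
    ENNReal.ofReal_prod_of_nonneg (f := fun i => gumbelCDFReal (m i) a)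
      fun _ _ => (exp_pos _).le]
  refine Finset.prod_congr rfl fun i _ => ?_
  rw [← Measure.map_apply (hX_meas i) measurableSet_Iic, hX_law, gumbelReal_Iic]

end Maximum

end ProbabilityTheory

theorem gumbel_expected_max_general {M : ℕ} (hM : 1 ≤ M) (v : Fin M → ℝ)
    {Ω : Type*} [MeasurableSpace Ω] (μ : Measure Ω)
    (ε : Fin M → Ω → ℝ) (hmeas : ∀ i, Measurable (ε i))
    (hindep : iIndepFun ε μ)
    (hgumbel : ∀ i, Measure.map (ε i) μ =
      volume.withDensity fun x => ENNReal.ofReal (Real.exp (-x) * Real.exp (-Real.exp (-x)))) :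
    ∫ ω, (⨆ m : Fin M, (v m + ε m ω)) ∂μ =
      Real.log (∑ m, Real.exp (v m)) + Real.eulerMascheroniConstant := by
  have : Nonempty (Fin M) := ⟨⟨0, hM⟩⟩
  have h_meas : ∀ i, Measurable fun ω => v i + ε i ω := fun i => (hmeas i).const_add (v i)
  have h_law : ∀ i, μ.map (fun ω => v i + ε i ω) = gumbelReal (v i) := fun i => by
    rw [show (fun ω => v i + ε i ω) = (v i + ·) ∘ ε i from rfl,
      ← Measure.map_map (measurable_const_add (v i)) (hmeas i), hgumbel i]
    simpa [gumbelReal, gumbelPDFReal] using map_const_add_gumbelReal (v i) 0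
  have h_max := iIndepFun.map_iSup_eq_gumbelReal h_meas
    (hindep.comp (fun i => (v i + ·)) fun i => measurable_const_add (v i)) h_law
  rw [← integral_id_gumbelReal, ← h_max]
  exact (integral_map (Measurable.iSup h_meas).aemeasurable aestronglyMeasurable_id).symm

/-- The expected maximum perceived utility under i.i.d. standard Gumbel
noise is the log-sum-exp of the observed utilities plus the Euler–Mascheroni constant. -/
theorem gumbel_expected_max {M : ℕ} (hM : 1 ≤ M) (v : Fin M → ℝ)
    {Ω : Type*} [MeasurableSpace Ω] (μ : Measure Ω) [IsProbabilityMeasure μ]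
    (ε : Fin M → Ω → ℝ) (hmeas : ∀ i, Measurable (ε i))
    (hindep : iIndepFun ε μ)
    (hgumbel : ∀ i, Measure.map (ε i) μ =
      volume.withDensity fun x => ENNReal.ofReal (Real.exp (-x) * Real.exp (-Real.exp (-x)))) :
    ∫ ω, (⨆ m : Fin M, (v m + ε m ω)) ∂μ =
      Real.log (∑ m, Real.exp (v m)) + Real.eulerMascheroniConstant :=
  gumbel_expected_max_general hM v μ ε hmeas hindep hgumbel
end

section
/- Fix M ≥ 1. Let P : ℝ^M → ℝ^M and S : ℝ^M → ℝ satisfy the regularity condition P(v₁)ᵀ(v₁ − v₂) ≥ S(v₁) − S(v₂) ≥ P(v₂)ᵀ(v₁ − v₂) for all v₁, v₂ ∈ ℝ^M, and let D : ℝ → ℝ be nondecreasing with D(s) ≥ 0 for all s. Then for all v₁, v₂ ∈ ℝ^M: (D(S(v₁)) P(v₁) − D(S(v₂)) P(v₂))ᵀ(v₁ − v₂) ≥ 0. -/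
open Matrix

/-- If the choice map `P` with satisfaction function `S` is regular and the
demand function `D` is nonnegative and nondecreasing, then the route-flow map
`v ↦ D(S(v)) • P(v)` is monotone nondecreasing with respect to the route utility. -/
theorem demand_choice_monotone {M : ℕ} (hM : 1 ≤ M)
    (P : (Fin M → ℝ) → (Fin M → ℝ)) (S : (Fin M → ℝ) → ℝ) (D : ℝ → ℝ)
    (hreg : ∀ v₁ v₂ : Fin M → ℝ,
      P v₁ ⬝ᵥ (v₁ - v₂) ≥ S v₁ - S v₂ ∧ S v₁ - S v₂ ≥ P v₂ ⬝ᵥ (v₁ - v₂))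
    (hDmono : Monotone D) (hDnonneg : ∀ s, 0 ≤ D s) :
    ∀ v₁ v₂ : Fin M → ℝ,
      0 ≤ (D (S v₁) • P v₁ - D (S v₂) • P v₂) ⬝ᵥ (v₁ - v₂) := by
  intro v₁ v₂
  obtain ⟨ha, hb⟩ := hreg v₁ v₂
  set a := P v₁ ⬝ᵥ (v₁ - v₂) with hadef
  set b := P v₂ ⬝ᵥ (v₁ - v₂) with hbdef
  have hexp : (D (S v₁) • P v₁ - D (S v₂) • P v₂) ⬝ᵥ (v₁ - v₂)
      = D (S v₁) * a - D (S v₂) * b := by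
    simp [sub_dotProduct, smul_dotProduct, hadef, hbdef, smul_eq_mul, dotProduct_sub]
    ring
  rw [hexp]
  rcases le_total (S v₂) (S v₁) with h | h
  · have hd : D (S v₂) ≤ D (S v₁) := hDmono h
    have ha0 : 0 ≤ a := le_trans (by linarith) ha
    nlinarith [hDnonneg (S v₂)]
  · have hd : D (S v₁) ≤ D (S v₂) := hDmono h
    have hb0 : b ≤ 0 := le_trans hb (by linarith)
    nlinarith [hDnonneg (S v₁)]
end

section
/- Fix L, M ≥ 1, let B be an L×M real matrix, β ≥ 0, and c_s ∈ ℝ^M, and define the route utility function V : ℝ^L → ℝ^M by V(c) = −β Bᵀ c − c_s. Let P : ℝ^M → ℝ^M and S : ℝ^M → ℝ satisfy the regularity condition P(v₁)ᵀ(v₁ − v₂) ≥ S(v₁) − S(v₂) ≥ P(v₂)ᵀ(v₁ − v₂) for all v₁, v₂ ∈ ℝ^M, and let D : ℝ → ℝ be nondecreasing with D(s) ≥ 0 for all s. Define the traffic assignment map g : ℝ^L → ℝ^L by g(c) = B · (D(S(V(c))) • P(V(c))). Then g is monotone nonincreasing: (g(c₁) − g(c₂))ᵀ(c₁ − c₂)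 ≤ 0 for all c₁, c₂ ∈ ℝ^L. -/
open Matrix

/-- The traffic assignment map `g(c) = B · (D(S(V(c))) • P(V(c)))`, built
from the affine route utility `V(c) = −β Bᵀ c − c_s`, a regular choice map `(P, S)`, and a
nonnegative nondecreasing demand function `D`, is monotone nonincreasing in the link
costs. -/
theorem traffic_assignment_monotone_nonincreasing {L M : ℕ} (hL : 1 ≤ L) (hM : 1 ≤ M)
    (B : Matrix (Fin L) (Fin M) ℝ) (β : ℝ) (hβ : 0 ≤ β) (cs : Fin M → ℝ)
    (V : (Fin L → ℝ) → (Fin M → ℝ))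
    (hV : ∀ c : Fin L → ℝ, V c = -(β • Bᵀ.mulVec c) - cs)
    (P : (Fin M → ℝ) → (Fin M → ℝ)) (S : (Fin M → ℝ) → ℝ)
    (hreg : ∀ v₁ v₂ : Fin M → ℝ,
      P v₁ ⬝ᵥ (v₁ - v₂) ≥ S v₁ - S v₂ ∧ S v₁ - S v₂ ≥ P v₂ ⬝ᵥ (v₁ - v₂))
    (D : ℝ → ℝ) (hDmono : Monotone D) (hDnonneg : ∀ s, 0 ≤ D s)
    (g : (Fin L → ℝ) → (Fin L → ℝ))
    (hg : ∀ c : Fin L → ℝ, g c = B.mulVec (D (S (V c)) • P (V c))) :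
    ∀ c₁ c₂ : Fin L → ℝ, (g c₁ - g c₂) ⬝ᵥ (c₁ - c₂) ≤ 0 := by
  intro c₁ c₂
  set v₁ := V c₁ with hv₁
  set v₂ := V c₂ with hv₂
  set x : Fin M → ℝ := D (S v₁) • P v₁ - D (S v₂) • P v₂ with hx
  set w : Fin M → ℝ := Bᵀ.mulVec (c₁ - c₂) with hw
  -- v₁ - v₂ = (-β) • w
  have hΔ : v₁ - v₂ = (-β) • w := by
    rw [hv₁, hv₂, hV c₁, hV c₂, hw]
    funext i
    simp [Matrix.mulVec_sub]
    ring
  -- rewrite the dot product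
  have hdot : (g c₁ - g c₂) ⬝ᵥ (c₁ - c₂) = x ⬝ᵥ w := by
    rw [hg c₁, hg c₂, ← hv₁, ← hv₂, ← Matrix.mulVec_sub, ← hx, hw,
      dotProduct_comm, Matrix.dotProduct_mulVec, ← Matrix.mulVec_transpose,
      dotProduct_comm]
  rw [hdot]
  -- key inequality: x ⬝ᵥ (v₁ - v₂) ≥ 0
  have hkey : 0 ≤ x ⬝ᵥ (v₁ - v₂) := by
    have h1 := (hreg v₁ v₂).1
    have h2 := (hreg v₁ v₂).2
    have hD1 := hDnonneg (S v₁)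
    have hD2 := hDnonneg (S v₂)
    have hsign : 0 ≤ (D (S v₁) - D (S v₂)) * (S v₁ - S v₂) := by
      rcases le_total (S v₁) (S v₂) with h | h
      · have := hDmono h
        nlinarith
      · have := hDmono h
        nlinarith
    have hexp : x ⬝ᵥ (v₁ - v₂)
        = D (S v₁) * (P v₁ ⬝ᵥ (v₁ - v₂)) - D (S v₂) * (P v₂ ⬝ᵥ (v₁ - v₂)) := by
      rw [hx, sub_dotProduct, smul_dotProduct, smul_dotProduct]
      simp [smul_eq_mul]
    rw [hexp]
    nlinarith [mul_le_mul_of_nonneg_left h1 hD1, mul_le_mul_of_nonneg_left h2 hD2]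
  -- conclude
  rcases eq_or_lt_of_le hβ with hβ0 | hβpos
  · have hΔ0 : v₁ = v₂ := sub_eq_zero.mp (by rw [hΔ, ← hβ0]; simp)
    have hx0 : x = 0 := by rw [hx, hΔ0]; simp
    rw [hx0]
    simp
  · have : x ⬝ᵥ ((-β) • w) ≥ 0 := by rw [← hΔ]; exact hkey
    have hxw : x ⬝ᵥ ((-β) • w) = (-β) * (x ⬝ᵥ w) := by
      rw [dotProduct_smul]; simp [smul_eq_mul]
    nlinarith
end
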